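/- arXiv:1909.12670 — 3 statements merged into one kernel-verified Lean document; each statement's English description precedes it below -/
import Mathlib

section
/- Let η > 0 be fixed and let n ∈ ℕ with 0 < 1/n ≪ η ≪ 1 (i.e. η is sufficiently small and n is sufficiently large as a function of η). Let B be the r-partite bottle graph with neck σ and width ω (σ, ω ∈ ℕ, σ < ω), let b := |B| = σ + (r−1)ω, and assume b divides n (and that the quantities ηn and ωn/b appearing below are integers). Then for any integer k with 1 ≤ k < ωn/b − (rb + 1)ηn, there exists a graph G on n vertices whose degree sequence d₁ ≤ … ≤ d_n satisfies d_i ≥ (1 − (ω + σ)/b)·n + (σ/ω)·i + ηn for all i ∈ {1, …, k−1} ∪ {k + rbηn + 1, …, ωn/b}, and d_i = (1 − (ω + σ)/b)·n + ⌈(σ/ω)·k⌉ + ηn for all k ≤ i ≤ k + rbηn, but such that G does not contain a B-tiling covering all but at most ηn vertices. -/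
open SimpleGraph

/-- The degree of a vertex, as the cardinality of its neighbour set. -/
noncomputable def degN {V : Type*} (G : SimpleGraph V) (v : V) : ℕ :=
  (G.neighborSet v).ncard

/-- `f` is a copy of `H` in `G`: an injective map preserving adjacency. -/
def IsCopy {α β : Type*} (H : SimpleGraph α) (G : SimpleGraph β) (f : α → β) : Prop :=
  Function.Injective f ∧ ∀ ⦃u v : α⦄, H.Adj u v → G.Adj (f u) (f v)

/-- An `H`-tiling in `G`: a collection of vertex-disjoint copies of `H` in `G`. -/
def IsTiling {α β : Type*} (H : SimpleGraph α) (G : SimpleGraph β) (T : Set (α → β)) : Prop :=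
  (∀ f ∈ T, IsCopy H G f) ∧
    T.Pairwise fun f g => Disjoint (Set.range f) (Set.range g)

/-- `G` contains a perfect `H`-tiling. -/
def HasPerfectTiling {α β : Type*} (H : SimpleGraph α) (G : SimpleGraph β) : Prop :=
  ∃ T : Set (α → β), IsTiling H G T ∧ ∀ v : β, ∃ f ∈ T, v ∈ Set.range f

/-- `σ(H)` relative to `r` colours: the smallest possible size of a colour class in
any proper colouring of `H` with `r` colours. -/
noncomputable def minClassSize {α : Type*} (H : SimpleGraph α) (r : ℕ) : ℕ :=
  sInf {s : ℕ | ∃ (c : H.Coloring (Fin r)) (i : Fin r), s = {v | c v = i}.ncard}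

/-- `hcf_χ(H) = 1`: the highest common factor of all differences of colour class sizes
over optimal colourings is 1 (equivalently, no `d ≥ 2` divides all such differences). -/
def HcfChiOne {α : Type*} (H : SimpleGraph α) (r : ℕ) : Prop :=
  ∀ d : ℕ, 2 ≤ d →
    ¬ ∀ (c : H.Coloring (Fin r)) (i j : Fin r),
        (d : ℤ) ∣ (({v | c v = i}.ncard : ℤ) - ({v | c v = j}.ncard : ℤ))

/-- `hcf_χ(H) ≤ 2`: some difference of colour class sizes is nonzero (so `hcf_χ(H) ≠ ∞`)
and no `d ≥ 3` divides all such differences. -/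
def HcfChiLeTwo {α : Type*} (H : SimpleGraph α) (r : ℕ) : Prop :=
  (∃ (c : H.Coloring (Fin r)) (i j : Fin r),
      {v | c v = i}.ncard ≠ {v | c v = j}.ncard) ∧
    ∀ d : ℕ, 3 ≤ d →
      ¬ ∀ (c : H.Coloring (Fin r)) (i j : Fin r),
          (d : ℤ) ∣ (({v | c v = i}.ncard : ℤ) - ({v | c v = j}.ncard : ℤ))

/-- `hcf_c(H) = 1`: the highest common factor of the orders of the components of `H` is 1. -/
def HcfCompOne {α : Type*} (H : SimpleGraph α) : Prop :=
  ∀ d : ℕ, 2 ≤ d → ∃ C : H.ConnectedComponent, ¬ d ∣ C.supp.ncard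

/-- `hcf(H) = 1` for a graph `H` with `χ(H) = r`. -/
def HcfOne {α : Type*} (H : SimpleGraph α) (r : ℕ) : Prop :=
  (r = 2 → HcfCompOne H ∧ HcfChiLeTwo H 2) ∧ (r ≠ 2 → HcfChiOne H r)


/-- `G` contains an `H`-tiling covering all but at most `m` vertices. -/
def HasTilingAllBut {α β : Type*} (H : SimpleGraph α) (G : SimpleGraph β) (m : ℕ) : Prop :=
  ∃ T : Set (α → β), IsTiling H G T ∧ {v : β | ∀ f ∈ T, v ∉ Set.range f}.ncard ≤ m

/-- The `r`-partite bottle graph with neck `σ` and width `ω`: the complete `r`-partite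
graph with one vertex class of size `σ` and `r - 1` classes of size `ω`. -/
abbrev bottleGraph (r σ ω : ℕ) : SimpleGraph (Σ i : Fin r, Fin (if (i : ℕ) = 0 then σ else ω)) :=
  completeMultipartiteGraph fun i : Fin r => Fin (if (i : ℕ) = 0 then σ else ω)

/-!
Write `r = q + 2`, `|B| = σ + (q + 1)ω`, `n = |B|N` and `E = ηn`. Order the vertices as
`L, C₁, …, C_q, M, P`, where `L` is an independent set of size `k + r|B|E`, each `C_j` is an
independent set of size `ωN - E`, `P` consists of `⌈σk/ω⌉ + (q + 1)E` universal vertices, and all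
remaining pairs are adjacent except those between `L` and `M`. Along this order the degrees
are `q(ωN - E) + |P|` on `L` (the flat stretch), `n - (ωN - E)` on the blocks, and larger on
`M` and `P`.

A copy of `B` meeting `L` has at most `ω` vertices there (they lie in one class); its other
`σ + qω` or more vertices are neighbours of `L`, hence lie in `C₁ ∪ … ∪ C_q ∪ P`, and each `C_j`
takes at most `ω` of them, so at least `σ` lie in `P`. Covering all but `E` vertices of `L` thus
forces `σ(|L| - E) ≤ ω|P|`, which the size of `L` rules out.
-/

section TilingObstruction

variable {ι β : Type*} [Fintype ι] {V : ι → Type*} [∀ i, Fintype (V i)] [DecidableEq β]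
  {G : SimpleGraph β} {f : (Σ i, V i) → β} {σ ω q : ℕ}

lemma card_filter_fst_eq_le [DecidableEq ι] (hV : ∀ i, Fintype.card (V i) ≤ ω) (i : ι) :
    (Finset.univ.filter fun u : Σ i, V i => u.1 = i).card ≤ ω := by
  classical
  have hsub : (Finset.univ.filter fun u : Σ i, V i => u.1 = i) ⊆
      Finset.univ.image (Sigma.mk i) := by
    rintro ⟨j, x⟩ hx
    obtain rfl : j = i := (Finset.mem_filter.1 hx).2
    exact Finset.mem_image_of_mem _ (Finset.mem_univ x)
  calc _ ≤ _ := Finset.card_le_card hsub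
    _ ≤ Fintype.card (V i) := Finset.card_image_le
    _ ≤ ω := hV i

lemma card_filter_mem_le_of_isIndepSet (hV : ∀ i, Fintype.card (V i) ≤ ω)
    (hf : ∀ ⦃u v⦄, (completeMultipartiteGraph V).Adj u v → G.Adj (f u) (f v))
    {S : Finset β} (hS : G.IsIndepSet (S : Set β)) :
    (Finset.univ.filter fun u => f u ∈ S).card ≤ ω := by
  classical
  rcases (Finset.univ.filter fun u => f u ∈ S).eq_empty_or_nonempty with h | ⟨u₀, hu₀⟩
  · simp [h]
  refine (Finset.card_le_card (t := Finset.univ.filter fun u => u.1 = u₀.1) fun u hu => ?_).trans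
    (card_filter_fst_eq_le hV u₀.1)
  rw [Finset.mem_filter] at hu hu₀ ⊢
  refine ⟨Finset.mem_univ _, not_not.1 fun h => ?_⟩
  have hadj := hf (show (completeMultipartiteGraph V).Adj u u₀ from h)
  exact hS hu.2 hu₀.2 hadj.ne hadj

variable {L P : Finset β} {C : Fin q → Finset β}

lemma le_card_filter_mem_of_mem (hV : ∀ i, Fintype.card (V i) ≤ ω)
    (hcard : σ + (q + 1) * ω ≤ Fintype.card (Σ i, V i))
    (hf : ∀ ⦃u v⦄, (completeMultipartiteGraph V).Adj u v → G.Adj (f u) (f v))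
    (hC : ∀ j, G.IsIndepSet (C j : Set β)) (hN : ∀ x ∈ L, ∀ y, G.Adj x y → y ∈ P ∨ ∃ j, y ∈ C j)
    {u₀ : Σ i, V i} (hu₀ : f u₀ ∈ L) :
    σ ≤ (Finset.univ.filter fun u => f u ∈ P).card := by
  classical
  have hother : σ + q * ω ≤ (Finset.univ.filter fun u : Σ i, V i => ¬u.1 = u₀.1).card := by
    have := Finset.card_filter_add_card_filter_not (s := Finset.univ)
      (fun u : Σ i, V i => u.1 = u₀.1)
    have := card_filter_fst_eq_le hV u₀.1
    rw [Finset.card_univ] at *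
    linarith [add_one_mul q ω]
  have hcover : (Finset.univ.filter fun u : Σ i, V i => ¬u.1 = u₀.1) ⊆
      (Finset.univ.filter fun u => f u ∈ P) ∪
        Finset.univ.biUnion fun j => Finset.univ.filter fun u => f u ∈ C j := by
    intro u hu
    have hadj := hf (show (completeMultipartiteGraph V).Adj u₀ u from
      Ne.symm (Finset.mem_filter.1 hu).2)
    rcases hN _ hu₀ _ hadj with hP | ⟨j, hj⟩
    · exact Finset.mem_union_left _ (Finset.mem_filter.2 ⟨Finset.mem_univ _, hP⟩)
    · exact Finset.mem_union_right _
        (Finset.mem_biUnion.2 ⟨j, Finset.mem_univ _, Finset.mem_filter.2 ⟨Finset.mem_univ _, hj⟩⟩)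
  have hblocks : (Finset.univ.biUnion fun j => Finset.univ.filter fun u => f u ∈ C j).card ≤
      q * ω := by
    refine Finset.card_biUnion_le.trans ?_
    simpa using Finset.sum_le_card_nsmul Finset.univ _ ω
      fun j _ => card_filter_mem_le_of_isIndepSet hV hf (hC j)
  have := (Finset.card_le_card hcover).trans (Finset.card_union_le _ _)
  omega

lemma mul_card_filter_mem_le (hV : ∀ i, Fintype.card (V i) ≤ ω)
    (hcard : σ + (q + 1) * ω ≤ Fintype.card (Σ i, V i))
    (hf : ∀ ⦃u v⦄, (completeMultipartiteGraph V).Adj u v → G.Adj (f u) (f v))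
    (hL : G.IsIndepSet (L : Set β)) (hC : ∀ j, G.IsIndepSet (C j : Set β))
    (hN : ∀ x ∈ L, ∀ y, G.Adj x y → y ∈ P ∨ ∃ j, y ∈ C j) :
    σ * (Finset.univ.filter fun u => f u ∈ L).card ≤
      ω * (Finset.univ.filter fun u => f u ∈ P).card := by
  rcases (Finset.univ.filter fun u => f u ∈ L).eq_empty_or_nonempty with h | ⟨u₀, hu₀⟩
  · simp [h]
  calc σ * _ ≤ σ * ω := Nat.mul_le_mul_left σ (card_filter_mem_le_of_isIndepSet hV hf hL)
    _ = ω * σ := Nat.mul_comm σ ω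
    _ ≤ _ := Nat.mul_le_mul_left ω
      (le_card_filter_mem_of_mem hV hcard hf hC hN (Finset.mem_filter.1 hu₀).2)

theorem mul_card_le_of_hasTilingAllBut [Fintype β] {E : ℕ} (hV : ∀ i, Fintype.card (V i) ≤ ω)
    (hcard : σ + (q + 1) * ω ≤ Fintype.card (Σ i, V i))
    (hL : G.IsIndepSet (L : Set β)) (hC : ∀ j, G.IsIndepSet (C j : Set β))
    (hN : ∀ x ∈ L, ∀ y, G.Adj x y → y ∈ P ∨ ∃ j, y ∈ C j)
    (hT : HasTilingAllBut (completeMultipartiteGraph V) G E) :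
    σ * L.card ≤ σ * E + ω * P.card := by
  classical
  obtain ⟨T, ⟨hcopy, hdisj⟩, hunc⟩ := hT
  have hTfin : T.Finite := Set.toFinite T
  have hLcover : L.card ≤ E + ∑ f ∈ hTfin.toFinset, (Finset.univ.filter fun u => f u ∈ L).card := by
    rw [Set.ncard_eq_toFinset_card', Set.toFinset_ofPred] at hunc
    have hsub : L ⊆ (Finset.univ.filter fun v => ∀ f ∈ T, v ∉ Set.range f) ∪
        hTfin.toFinset.biUnion fun f => (Finset.univ.filter fun u => f u ∈ L).image f := by
      intro v hv
      by_cases hcov : ∀ f ∈ T, v ∉ Set.range f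
      · exact Finset.mem_union_left _ (Finset.mem_filter.2 ⟨Finset.mem_univ _, hcov⟩)
      push Not at hcov
      obtain ⟨f, hfT, u, rfl⟩ := hcov
      refine Finset.mem_union_right _ (Finset.mem_biUnion.2 ⟨f, hTfin.mem_toFinset.2 hfT, ?_⟩)
      exact Finset.mem_image_of_mem _ (Finset.mem_filter.2 ⟨Finset.mem_univ _, hv⟩)
    refine (Finset.card_le_card hsub).trans ((Finset.card_union_le _ _).trans ?_)
    gcongr
    exact Finset.card_biUnion_le.trans (Finset.sum_le_sum fun f _ => Finset.card_image_le)
  have hPpack : ∑ f ∈ hTfin.toFinset, (Finset.univ.filter fun u => f u ∈ P).card ≤ P.card := by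
    have hinj : ∀ f ∈ hTfin.toFinset, ((Finset.univ.filter fun u => f u ∈ P).image f).card =
        (Finset.univ.filter fun u => f u ∈ P).card := fun f hf =>
      Finset.card_image_of_injective _ (hcopy f (hTfin.mem_toFinset.1 hf)).1
    rw [← Finset.sum_congr rfl hinj, ← Finset.card_biUnion]
    · refine Finset.card_le_card fun v hv => ?_
      obtain ⟨f, -, hv⟩ := Finset.mem_biUnion.1 hv
      obtain ⟨u, hu, rfl⟩ := Finset.mem_image.1 hv
      exact (Finset.mem_filter.1 hu).2
    · intro f hf g hg hfg
      refine Finset.disjoint_left.2 fun v hvf hvg => ?_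
      obtain ⟨u, -, rfl⟩ := Finset.mem_image.1 hvf
      obtain ⟨w, -, hw⟩ := Finset.mem_image.1 hvg
      exact Set.disjoint_left.1 (hdisj (hTfin.mem_toFinset.1 hf) (hTfin.mem_toFinset.1 hg) hfg)
        ⟨u, rfl⟩ ⟨w, hw⟩
  calc σ * L.card
      ≤ σ * E + ∑ f ∈ hTfin.toFinset, σ * (Finset.univ.filter fun u => f u ∈ L).card := by
        rw [← Finset.mul_sum, ← mul_add]
        exact Nat.mul_le_mul_left σ hLcover
    _ ≤ σ * E + ∑ f ∈ hTfin.toFinset, ω * (Finset.univ.filter fun u => f u ∈ P).card := by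
        gcongr σ * E + ?_
        exact Finset.sum_le_sum fun f hf =>
          mul_card_filter_mem_le hV hcard (hcopy f (hTfin.mem_toFinset.1 hf)).2 hL hC hN
    _ ≤ σ * E + ω * P.card := by
        rw [← Finset.mul_sum]
        gcongr

end TilingObstruction

lemma card_filter_fin_val (n : ℕ) (P : ℕ → Prop) [DecidablePred P] :
    (Finset.univ.filter fun y : Fin n => P y).card = ((Finset.range n).filter P).card := by
  rw [← Finset.card_map Fin.valEmbedding]
  congr 1
  ext x
  simp only [Finset.mem_map, Finset.mem_filter, Finset.mem_univ, true_and, Fin.valEmbedding_apply,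
    Finset.mem_range]
  exact ⟨by rintro ⟨y, hy, rfl⟩; exact ⟨y.2, hy⟩, fun ⟨hx, h⟩ => ⟨⟨x, hx⟩, h, rfl⟩⟩

lemma filter_range_sub_div_eq (a c j n : ℕ) (hc : 0 < c) (hn : a + (j + 1) * c ≤ n) :
    (Finset.range n).filter (fun y => a ≤ y ∧ (y - a) / c = j) =
      Finset.Ico (a + j * c) (a + j * c + c) := by
  ext y
  have h1 := Nat.le_div_iff_mul_le (x := j) (y := y - a) hc
  have h2 := Nat.div_lt_iff_lt_mul (x := y - a) (y := j + 1) hc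
  have h3 : (j + 1) * c = j * c + c := by ring
  simp only [Finset.mem_filter, Finset.mem_range, Finset.mem_Ico]
  omega

section ExtremalGraph

/-- The vertex `x` lies in `L = [0, a)`, in the block `(x - a) / c` of width `c` if
`a ≤ x < a + qc`, in `M = [a + qc, n - p)`, or in `P = [n - p, n)`. The non-edges of
`extremalGraph` are the pairs inside `L`, between `L` and `M`, and inside a block. -/
def ExtremalNonAdj (n a c q p x y : ℕ) : Prop :=
  x < a ∧ (y < a ∨ a + q * c ≤ y ∧ y < n - p) ∨
    a ≤ x ∧ a ≤ y ∧ (x - a) / c = (y - a) / c ∧ (x - a) / c < q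

def extremalGraph (n a c q p : ℕ) : SimpleGraph (Fin n) :=
  (SimpleGraph.fromRel fun x y : Fin n => ExtremalNonAdj n a c q p x y)ᶜ

variable {n a c q p : ℕ} {x y : Fin n}

lemma extremalGraph_adj :
    (extremalGraph n a c q p).Adj x y ↔
      (x : ℕ) ≠ y ∧ ¬ExtremalNonAdj n a c q p x y ∧ ¬ExtremalNonAdj n a c q p y x := by
  simp only [extremalGraph, compl_adj, fromRel_adj, Fin.val_ne_iff]
  tauto

lemma extremalGraph_adj_of_lt (hx : (x : ℕ) < a) :
    (extremalGraph n a c q p).Adj x y ↔ a ≤ y ∧ ((y : ℕ) < a + q * c ∨ n - p ≤ y) := by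
  simp only [extremalGraph_adj, ExtremalNonAdj]
  omega

lemma extremalGraph_adj_of_block (hc : 0 < c) (ha : a ≤ x) (hx : (x : ℕ) < a + q * c) :
    (extremalGraph n a c q p).Adj x y ↔ ¬(a ≤ y ∧ ((y : ℕ) - a) / c = (x - a) / c) := by
  have hxq : ((x : ℕ) - a) / c < q := (Nat.div_lt_iff_lt_mul hc).2 (by omega)
  have hxy : (x : ℕ) = y → ((y : ℕ) - a) / c = (x - a) / c := fun h => by rw [h]
  simp only [extremalGraph_adj, ExtremalNonAdj]
  generalize ((x : ℕ) - a) / c = i at *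
  generalize ((y : ℕ) - a) / c = j at *
  omega

lemma extremalGraph_adj_of_le (hc : 0 < c) (hx : a + q * c ≤ x) :
    (extremalGraph n a c q p).Adj x y ↔ (y : ℕ) ≠ x ∧ ((x : ℕ) < n - p → a ≤ y) := by
  have hxq : q ≤ ((x : ℕ) - a) / c := (Nat.le_div_iff_mul_le hc).2 (by omega)
  simp only [extremalGraph_adj, ExtremalNonAdj]
  omega

lemma degN_extremalGraph_eq_card_filter (P : ℕ → Prop) [DecidablePred P]
    (h : ∀ y : Fin n, (extremalGraph n a c q p).Adj x y ↔ P y) :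
    degN (extremalGraph n a c q p) x = ((Finset.range n).filter P).card := by
  rw [degN, ← card_filter_fin_val, ← Set.ncard_coe_finset]
  congr 1
  ext y
  simp [h]

lemma degN_extremalGraph_of_lt (hn : a + q * c + p ≤ n) (hx : (x : ℕ) < a) :
    degN (extremalGraph n a c q p) x = q * c + p := by
  classical
  rw [degN_extremalGraph_eq_card_filter (fun y => a ≤ y ∧ (y < a + q * c ∨ n - p ≤ y))
    fun y => extremalGraph_adj_of_lt hx]
  have : (Finset.range n).filter (fun y => a ≤ y ∧ (y < a + q * c ∨ n - p ≤ y)) =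
      Finset.Ico a (a + q * c) ∪ Finset.Ico (n - p) n := by
    ext y
    simp only [Finset.mem_filter, Finset.mem_range, Finset.mem_union, Finset.mem_Ico]
    omega
  rw [this, Finset.card_union_of_disjoint, Nat.card_Ico, Nat.card_Ico]
  · omega
  · rw [Finset.disjoint_left]
    simp only [Finset.mem_Ico]
    omega

lemma degN_extremalGraph_of_block (hc : 0 < c) (hn : a + q * c ≤ n) (ha : a ≤ x)
    (hx : (x : ℕ) < a + q * c) :
    degN (extremalGraph n a c q p) x = n - c := by
  classical
  rw [degN_extremalGraph_eq_card_filter (fun y => ¬(a ≤ y ∧ (y - a) / c = (x - a) / c))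
      fun y => extremalGraph_adj_of_block hc ha hx,
    Finset.filter_not, Finset.card_sdiff_of_subset (Finset.filter_subset _ _), Finset.card_range,
    filter_range_sub_div_eq _ _ _ _ hc, Nat.card_Ico]
  · omega
  · have hxq : ((x : ℕ) - a) / c < q := (Nat.div_lt_iff_lt_mul hc).2 (by omega)
    calc a + ((x - a) / c + 1) * c ≤ a + q * c := by gcongr; omega
      _ ≤ n := hn

lemma degN_extremalGraph_of_le (hc : 0 < c) (hx : a + q * c ≤ x) :
    degN (extremalGraph n a c q p) x = if (x : ℕ) < n - p then n - 1 - a else n - 1 := by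
  classical
  rw [degN_extremalGraph_eq_card_filter (fun y : ℕ => y ≠ x ∧ ((x : ℕ) < n - p → a ≤ y))
    fun y => extremalGraph_adj_of_le hc hx]
  split_ifs with h
  · have hM : (Finset.range n).filter (fun y : ℕ => y ≠ x ∧ ((x : ℕ) < n - p → a ≤ y)) =
        (Finset.Ico a n).erase x := by
      ext y
      simp only [Finset.mem_filter, Finset.mem_range, Finset.mem_erase, Finset.mem_Ico]
      omega
    rw [hM, Finset.card_erase_of_mem (by simp only [Finset.mem_Ico]; omega), Nat.card_Ico]
    omega
  · have hP : (Finset.range n).filter (fun y : ℕ => y ≠ x ∧ ((x : ℕ) < n - p → a ≤ y)) =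
        (Finset.range n).erase x := by
      ext y
      simp only [Finset.mem_filter, Finset.mem_range, Finset.mem_erase]
      omega
    rw [hP, Finset.card_erase_of_mem (by simp), Finset.card_range]

lemma degN_extremalGraph (hc : 0 < c) (hn : a + q * c + p ≤ n) (x : Fin n) :
    degN (extremalGraph n a c q p) x =
      if (x : ℕ) < a then q * c + p
      else if (x : ℕ) < a + q * c then n - c
      else if (x : ℕ) < n - p then n - 1 - a
      else n - 1 := by
  split_ifs with hL hC hM
  · exact degN_extremalGraph_of_lt hn hL
  · exact degN_extremalGraph_of_block hc (by omega) (by omega) hC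
  · rw [degN_extremalGraph_of_le hc (not_lt.1 hC), if_pos hM]
  · rw [degN_extremalGraph_of_le hc (not_lt.1 hC), if_neg hM]

lemma monotone_degN_extremalGraph (hac : a < c) (hn : (q + 1) * c + p ≤ n) :
    Monotone (degN (extremalGraph n a c q p)) := by
  have hn' : a + q * c + p ≤ n := by linarith [add_one_mul q c]
  intro x y hxy
  rw [degN_extremalGraph (by omega) hn', degN_extremalGraph (by omega) hn']
  have : (x : ℕ) ≤ y := hxy
  have := add_one_mul q c
  split_ifs <;> omega

lemma le_degN_extremalGraph (hac : a < c) (hn : a + q * c + p ≤ n) {x : Fin n} (hx : a ≤ x) :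
    n - c ≤ degN (extremalGraph n a c q p) x := by
  rw [degN_extremalGraph (by omega) hn]
  split_ifs <;> omega

end ExtremalGraph

lemma card_bottleGraph_verts (q σ ω : ℕ) :
    Fintype.card (Σ i : Fin (q + 2), Fin (if (i : ℕ) = 0 then σ else ω)) = σ + (q + 1) * ω := by
  simp [Fintype.card_sigma, Fin.sum_univ_succ]

lemma not_hasTilingAllBut_bottleGraph_extremalGraph {q σ ω n a c p E : ℕ} (hσω : σ ≤ ω)
    (hc : 0 < c) (hn : a + q * c + p ≤ n) (hcount : σ * E + ω * p < σ * a) :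
    ¬HasTilingAllBut (bottleGraph (q + 2) σ ω) (extremalGraph n a c q p) E := by
  intro hT
  have hV (i : Fin (q + 2)) : Fintype.card (Fin (if (i : ℕ) = 0 then σ else ω)) ≤ ω := by
    rw [Fintype.card_fin]; split_ifs <;> omega
  refine absurd (mul_card_le_of_hasTilingAllBut (E := E)
    (L := Finset.univ.filter fun x : Fin n => (x : ℕ) < a)
    (P := Finset.univ.filter fun x : Fin n => n - p ≤ (x : ℕ))
    (C := fun j : Fin q => Finset.univ.filter fun x : Fin n => a ≤ (x : ℕ) ∧ ((x : ℕ) - a) / c = j)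
    hV (card_bottleGraph_verts q σ ω).ge ?_ ?_ ?_ hT) ?_
  · intro x hx y hy _ hadj
    simp only [Finset.coe_filter, Finset.mem_univ, true_and, Set.mem_ofPred_eq] at hx hy
    have := (extremalGraph_adj_of_lt hx).1 hadj
    omega
  · intro j x hx y hy _ hadj
    simp only [Finset.coe_filter, Finset.mem_univ, true_and, Set.mem_ofPred_eq] at hx hy
    have hxq : (x : ℕ) < a + q * c := by
      have := (Nat.div_lt_iff_lt_mul hc).1 (hx.2 ▸ j.2)
      omega
    exact (extremalGraph_adj_of_block hc hx.1 hxq).1 hadj ⟨hy.1, hy.2.trans hx.2.symm⟩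
  · intro x hx y hadj
    simp only [Finset.mem_filter, Finset.mem_univ, true_and] at hx ⊢
    obtain ⟨hay, hy | hy⟩ := (extremalGraph_adj_of_lt hx).1 hadj
    · exact Or.inr ⟨⟨((y : ℕ) - a) / c, (Nat.div_lt_iff_lt_mul hc).2 (by omega)⟩, hay, rfl⟩
    · exact Or.inl hy
  · have hP : (Finset.range n).filter (n - p ≤ ·) = Finset.Ico (n - p) n := by
      ext; simp only [Finset.mem_filter, Finset.mem_range, Finset.mem_Ico]; omega
    rw [Fin.card_filter_val_lt, min_eq_right (by omega), card_filter_fin_val, hP, Nat.card_Ico,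
      Nat.sub_sub_self (by omega)]
    omega

lemma div_mul_le_natCeil {s w m k : ℕ} (hmk : m ≤ k) : (s : ℝ) / w * m ≤ ⌈(s : ℝ) * k / w⌉₊ :=
  calc (s : ℝ) / w * m ≤ (s : ℝ) / w * k := by gcongr
    _ = (s : ℝ) * k / w := div_mul_eq_mul_div _ _ _
    _ ≤ _ := Nat.le_ceil _

lemma natCeil_le_of_le_mul {s w k N : ℕ} (hw : 0 < w) (hk : k ≤ w * N) :
    ⌈(s : ℝ) * k / w⌉₊ ≤ s * N := by
  rw [Nat.ceil_le, div_le_iff₀ (by positivity)]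
  exact_mod_cast (Nat.mul_le_mul_left s hk).trans_eq (by ring)

lemma mul_natCeil_lt {s w k : ℕ} (hw : 0 < w) : w * ⌈(s : ℝ) * k / w⌉₊ < s * k + w := by
  have hlt := Nat.ceil_lt_add_one (by positivity : 0 ≤ (s : ℝ) * k / w)
  rw [← sub_lt_iff_lt_add, lt_div_iff₀ (by positivity)] at hlt
  exact_mod_cast (by linarith : (w : ℝ) * ⌈(s : ℝ) * k / w⌉₊ < s * k + w)

lemma div_mul_le_of_le_mul {s w m N : ℕ} (hw : 0 < w) (hm : m ≤ w * N) :
    (s : ℝ) / w * m ≤ s * N := by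
  rw [div_mul_eq_mul_div, div_le_iff₀ (by positivity)]
  exact_mod_cast (Nat.mul_le_mul_left s hm).trans_eq (by ring)

lemma one_sub_div_mul_eq {q σ ω : ℕ} (hω : 0 < ω) (N : ℕ) :
    (1 - ((ω : ℝ) + σ) / (σ + (((q + 2 : ℕ) : ℝ) - 1) * ω)) * (((σ + (q + 1) * ω) * N : ℕ) : ℝ) =
      q * (ω * N) := by
  have hb : (σ : ℝ) + (((q + 2 : ℕ) : ℝ) - 1) * ω = σ + (q + 1) * ω := by push_cast; ring
  have : (σ : ℝ) + (q + 1) * ω ≠ 0 := by positivity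
  rw [hb, Nat.cast_mul, Nat.cast_add, Nat.cast_mul, Nat.cast_add, Nat.cast_one]
  field_simp
  ring

theorem exists_extremal_graph_bottle {q σ ω N E k cl : ℕ} (hσ : 0 < σ) (hσω : σ ≤ ω)
    (hE : 1 ≤ E) (hk : k + ((q + 2) * (σ + (q + 1) * ω) + 1) * E < ω * N)
    (hcl : ω * cl < σ * k + ω) (hclN : cl ≤ σ * N) :
    ∃ G : SimpleGraph (Fin ((σ + (q + 1) * ω) * N)), Monotone (degN G) ∧
      (∀ x : Fin _, (x : ℕ) < k + (q + 2) * (σ + (q + 1) * ω) * E →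
        degN G x = q * (ω * N) + cl + E) ∧
      (∀ x : Fin _, k + (q + 2) * (σ + (q + 1) * ω) * E ≤ x →
        q * (ω * N) + σ * N + E ≤ degN G x) ∧
      ¬HasTilingAllBut (bottleGraph (q + 2) σ ω) G E := by
  set b := σ + (q + 1) * ω with hb
  have hac : k + (q + 2) * b * E < ω * N - E := by
    have := add_one_mul ((q + 2) * b) E
    omega
  have hblocks (m : ℕ) : m * (ω * N - E) + m * E = m * (ω * N) := by
    rw [← mul_add, Nat.sub_add_cancel (by omega)]
  have hn : (q + 1) * (ω * N - E) + (cl + (q + 1) * E) ≤ b * N := by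
    have := hblocks (q + 1)
    have : b * N = σ * N + (q + 1) * (ω * N) := by ring
    omega
  have hn' : k + (q + 2) * b * E + q * (ω * N - E) + (cl + (q + 1) * E) ≤ b * N := by
    have := add_one_mul q (ω * N - E)
    omega
  have hcount : σ * E + ω * (cl + (q + 1) * E) < σ * (k + (q + 2) * b * E) := by
    have h1 : ω ≤ ω * E := Nat.le_mul_of_pos_right _ hE
    have h2 := Nat.le_mul_of_pos_left ((q + 2) * b * E) hσ
    have h3 : σ * E + ω * E + (q + 1) * ω * E ≤ (q + 2) * b * E := by
      rw [hb]; ring_nf; omega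
    have h4 : σ * (k + (q + 2) * b * E) = σ * k + σ * ((q + 2) * b * E) := by ring
    have h5 : ω * (cl + (q + 1) * E) = ω * cl + (q + 1) * ω * E := by ring
    omega
  refine ⟨extremalGraph (b * N) (k + (q + 2) * b * E) (ω * N - E) q (cl + (q + 1) * E),
    monotone_degN_extremalGraph hac hn, fun x hx => ?_, fun x hx => ?_,
    not_hasTilingAllBut_bottleGraph_extremalGraph hσω (by omega) hn' hcount⟩
  · rw [degN_extremalGraph_of_lt hn' hx]
    have := hblocks q
    have := add_one_mul q E
    omega
  · refine le_trans ?_ (le_degN_extremalGraph hac hn' hx)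
    have : b * N = σ * N + q * (ω * N) + ω * N := by ring
    omega

/-- Proposition 2.3: the slope of the degree sequence condition
is best possible for bottle graphs.  Here `b = |B| = σ + (r-1)ω`, `E = ηn` and
`W = ωn/b` (both integers by assumption). -/
theorem extremal_example_bottle
    (r σ ω : ℕ) (hr : 2 ≤ r) (hσ : 0 < σ) (hσω : σ < ω) :
    ∃ η₀ : ℝ, 0 < η₀ ∧ ∀ η : ℝ, 0 < η → η ≤ η₀ →
      ∃ n₀ : ℕ, ∀ n : ℕ, n₀ ≤ n → (σ + (r - 1) * ω) ∣ n →
        ∀ E : ℕ, (E : ℝ) = η * n →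
          ∀ k : ℕ, 1 ≤ k →
            k + (r * (σ + (r - 1) * ω) + 1) * E < ω * (n / (σ + (r - 1) * ω)) →
            ∃ G : SimpleGraph (Fin n),
              (∃ e : Fin n ≃ Fin n,
                (∀ i j : Fin n, i ≤ j → degN G (e i) ≤ degN G (e j)) ∧
                (∀ i : Fin n,
                  (((i : ℕ) + 1 < k) ∨
                    (k + r * (σ + (r - 1) * ω) * E < (i : ℕ) + 1 ∧
                      (i : ℕ) + 1 ≤ ω * (n / (σ + (r - 1) * ω)))) →
                  (1 - ((ω : ℝ) + σ) / (σ + (r - 1) * ω)) * n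
                      + ((σ : ℝ) / ω) * ((i : ℕ) + 1) + η * n ≤ (degN G (e i) : ℝ)) ∧
                (∀ i : Fin n, k ≤ (i : ℕ) + 1 →
                  (i : ℕ) + 1 ≤ k + r * (σ + (r - 1) * ω) * E →
                  (degN G (e i) : ℝ) =
                    (1 - ((ω : ℝ) + σ) / (σ + (r - 1) * ω)) * n
                      + ((⌈(σ : ℝ) * k / ω⌉ : ℤ) : ℝ) + η * n)) ∧
              ¬ HasTilingAllBut (bottleGraph r σ ω) G E := by
  refine ⟨1, one_pos, fun η hη _ => ⟨0, fun n _ hdvd E hE k hk hkW => ?_⟩⟩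
  obtain ⟨q, rfl⟩ : ∃ q, r = q + 2 := ⟨r - 2, by omega⟩
  obtain ⟨N, rfl⟩ := hdvd
  rw [show q + 2 - 1 = q + 1 from rfl] at hkW hE ⊢
  rw [Nat.mul_div_cancel_left N (by positivity)] at hkW ⊢
  have hω : 0 < ω := by omega
  have hE1 : 1 ≤ E := by
    have hN : 0 < N := Nat.pos_of_ne_zero (by rintro rfl; simp at hkW)
    exact_mod_cast (show (0 : ℝ) < E by rw [hE]; positivity)
  obtain ⟨G, hmono, hlow, hhigh, htile⟩ := exists_extremal_graph_bottle hσ hσω.le hE1 hkW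
    (mul_natCeil_lt hω) (natCeil_le_of_le_mul hω (by omega))
  refine ⟨G, ⟨Equiv.refl _, fun i j h => hmono h, fun i hi => ?_, fun i hi₁ hi₂ => ?_⟩, htile⟩
  all_goals simp only [Equiv.refl_apply]; rw [one_sub_div_mul_eq hω, ← hE]
  · rcases hi with hi | ⟨hi₁, hi₂⟩
    · have hslope := div_mul_le_natCeil (s := σ) (w := ω) hi.le
      rw [hlow i (by omega)]
      push_cast at hslope ⊢
      linarith
    · have hslope := div_mul_le_of_le_mul (s := σ) hω hi₂
      have hdeg := (Nat.cast_le (α := ℝ)).2 (hhigh i (by omega))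
      push_cast at hslope hdeg
      linarith
  · rw [hlow i (by omega), ← natCast_ceil_eq_intCast_ceil (by positivity)]
    push_cast
    ring
end

section
/- Let η > 0 be fixed and let H be a graph with χ(H) =: r. Let h := |H|, σ := σ(H) and ω := (h − σ)/(r − 1). Then (for all sufficiently large n for which the quantities below are integers) there exists a graph G on n vertices whose degree sequence d₁ ≤ … ≤ d_n satisfies d_i = (1 − ω/h − (r−1)η)·n for all i ≤ (ω/h + (r−1)η)·n and d_i ≥ (1 − ω/h + η)·n for all i > (ω/h + (r−1)η)·n, but such that G does not contain an H-tiling covering all but at most ηn vertices. (Note (1 − ω/h)n = (1 − 1/χ_cr(H))n.) -/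
open SimpleGraph

/-!
The extremal graph is complete `r`-partite: one part of `s` vertices (these have degree
`n - s = dlow`), then `r - 2` parts of size `cap = (ω/h - η)n`, and a last part holding the
remaining `≈ (σ/h - η)n` vertices, so that all other degrees are at least `n - cap`. A copy of `H`
in a complete `r`-partite graph induces a proper `r`-colouring of `H` by its parts, so it meets
the last part in at least `σ` vertices. Hence a tiling has at most `|last part|/σ` copies, which
cover at most `h·|last part|/σ = (1 - hη/σ)n < (1 - η)n` vertices, since `h > σ`.
-/

open Finset

section MinClassSize

variable {α : Type*} (H : SimpleGraph α) {r : ℕ}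

lemma minClassSize_le_ncard (c : H.Coloring (Fin r)) (i : Fin r) :
    minClassSize H r ≤ {v | c v = i}.ncard :=
  Nat.sInf_le ⟨c, i, rfl⟩

lemma one_le_minClassSize [Finite α] (hr : 0 < r) (hχ : H.chromaticNumber = r) :
    1 ≤ minClassSize H r := by
  obtain ⟨c₀⟩ := chromaticNumber_le_iff_colorable.mp hχ.le
  have hmem : minClassSize H r ∈
      {s : ℕ | ∃ (c : H.Coloring (Fin r)) (i : Fin r), s = {v | c v = i}.ncard} :=
    Nat.sInf_mem ⟨_, c₀, ⟨0, hr⟩, rfl⟩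
  obtain ⟨c, i, hci⟩ := hmem
  obtain ⟨v, hv⟩ := (chromaticNumber_eq_iff_forall_surjective ⟨c₀⟩).mp hχ c i
  rw [hci, Nat.one_le_iff_ne_zero, Ne, Set.ncard_eq_zero]
  exact Set.nonempty_iff_ne_empty.mp ⟨v, hv⟩

lemma mul_minClassSize_le_card [Fintype α] (c : H.Coloring (Fin r)) :
    r * minClassSize H r ≤ Fintype.card α := by
  calc r * minClassSize H r = ∑ _i : Fin r, minClassSize H r := by simp
    _ ≤ ∑ i : Fin r, #{v | c v = i} := sum_le_sum fun i _ => by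
        simpa [Set.ncard_eq_toFinset_card'] using minClassSize_le_ncard H c i
    _ = Fintype.card α := (card_eq_sum_card_fiberwise fun v _ => mem_univ (c v)).symm

end MinClassSize

lemma degN_comap_top {β ι : Type*} [Fintype β] [DecidableEq ι] (P : β → ι) (v : β) :
    degN ((⊤ : SimpleGraph ι).comap P) v = Fintype.card β - #{u | P u = P v} := by
  have : ((⊤ : SimpleGraph ι).comap P).neighborSet v = ({u | P u = P v} : Set β)ᶜ := by
    ext u; simp [eq_comm]
  rw [degN, this, Set.ncard_compl, Nat.card_eq_fintype_card, Set.ncard_eq_toFinset_card']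
  simp

lemma exists_card_fiber_eq {r n : ℕ} (c : Fin r → ℕ) (hc : ∑ j, c j = n) :
    ∃ P : Fin n → Fin r, ∀ j, #{v | P v = j} = c j := by
  subst hc
  refine ⟨fun v => (finSigmaFinEquiv.symm v).1, fun j => ?_⟩
  have hfiber : (({v | (finSigmaFinEquiv.symm v).1 = j} : Finset (Fin (∑ i, c i))) :
      Set (Fin (∑ i, c i))) =
      Set.range (finSigmaFinEquiv ∘ Sigma.mk j) := by
    ext v
    simp only [coe_filter, mem_univ, true_and, Set.mem_ofPred_eq, Set.mem_range,
      Function.comp_apply]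
    constructor
    · rintro rfl; exact ⟨(finSigmaFinEquiv.symm v).2, by simp⟩
    · rintro ⟨x, rfl⟩; simp
  rw [← Set.ncard_coe_finset, hfiber,
    Set.ncard_range_of_injective (finSigmaFinEquiv.injective.comp sigma_mk_injective),
    Nat.card_eq_fintype_card, Fintype.card_fin]

section Tiling

variable {α β : Type*} [Fintype α] [Fintype β] [DecidableEq β] {H : SimpleGraph α}

lemma card_le_ncard_uncovered_add (T : Finset (α → β)) :
    Fintype.card β ≤ {v : β | ∀ f ∈ T, v ∉ Set.range f}.ncard + Fintype.card α * #T := by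
  have huncov : {v : β | ∀ f ∈ T, v ∉ Set.range f} = ↑(T.biUnion fun f => univ.image f)ᶜ := by
    ext v; simp
  have hcov : #(T.biUnion fun f => univ.image f) ≤ #T * Fintype.card α :=
    card_biUnion_le_card_mul _ _ _ fun f _ => card_image_le
  rw [huncov, Set.ncard_coe_finset, card_compl]
  rw [mul_comm] at hcov
  omega

lemma IsTiling.minClassSize_mul_card_le {r : ℕ} {P : β → Fin r} {T : Finset (α → β)}
    (hT : IsTiling H ((⊤ : SimpleGraph (Fin r)).comap P) T) (j : Fin r) :
    minClassSize H r * #T ≤ #{v | P v = j} := by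
  obtain ⟨hcopy, hdisj⟩ := hT
  let part (f : α → β) : Finset β := (univ.filter fun a => P (f a) = j).image f
  have hpart : ∀ f ∈ T, minClassSize H r ≤ #(part f) := fun f hf => by
    rw [card_image_of_injective _ (hcopy f hf).1]
    have := minClassSize_le_ncard H (Coloring.mk (P ∘ f) fun huv => (hcopy f hf).2 huv) j
    rwa [Set.ncard_eq_toFinset_card', Set.toFinset_ofPred] at this
  have hparts : (T : Set (α → β)).PairwiseDisjoint part := fun f hf g hg hfg =>
    disjoint_left.mpr fun x hxf hxg => by
      obtain ⟨a, -, rfl⟩ := mem_image.mp hxf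
      obtain ⟨b, -, hb⟩ := mem_image.mp hxg
      exact Set.disjoint_left.mp (hdisj hf hg hfg) ⟨a, rfl⟩ ⟨b, hb⟩
  calc minClassSize H r * #T ≤ ∑ f ∈ T, #(part f) := by
        rw [mul_comm]; exact card_nsmul_le_sum _ _ _ hpart
    _ = #(T.biUnion part) := (card_biUnion hparts).symm
    _ ≤ #{v | P v = j} := card_le_card fun x hx => by
        obtain ⟨f, -, hx⟩ := mem_biUnion.mp hx
        obtain ⟨a, ha, rfl⟩ := mem_image.mp hx
        simpa using (mem_filter.mp ha).2

theorem not_hasTilingAllBut_comap_top {r m : ℕ} (P : β → Fin r) (j : Fin r)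
    (hsmall : Fintype.card α * #{v | P v = j} < minClassSize H r * (Fintype.card β - m)) :
    ¬ HasTilingAllBut H ((⊤ : SimpleGraph (Fin r)).comap P) m := by
  rintro ⟨T, hT, hunc⟩
  obtain ⟨T, rfl⟩ := (Set.toFinite T).exists_finset_coe
  simp only [mem_coe] at hunc
  have hcov := card_le_ncard_uncovered_add T
  have hpart := hT.minClassSize_mul_card_le j
  have : minClassSize H r * (Fintype.card β - m) ≤ Fintype.card α * #{v | P v = j} :=
    calc minClassSize H r * (Fintype.card β - m)
        ≤ minClassSize H r * (Fintype.card α * #T) := Nat.mul_le_mul_left _ (by omega)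
      _ = Fintype.card α * (minClassSize H r * #T) := by ring
      _ ≤ Fintype.card α * #{v | P v = j} := Nat.mul_le_mul_left _ hpart
  omega

end Tiling

lemma Fin.val_lt_card_filter_iff {n : ℕ} {p : Fin n → Prop} [DecidablePred p]
    (hp : ∀ ⦃i j⦄, j ≤ i → p i → p j) (i : Fin n) : (i : ℕ) < #{j | p j} ↔ p i := by
  constructor
  · intro hi
    by_contra hpi
    have : univ.filter p ⊆ Iio i := fun j hj => by
      simp only [mem_filter, mem_univ, true_and] at hj
      exact mem_Iio.mpr (lt_of_not_ge fun hij => hpi (hp hij hj))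
    exact absurd ((card_le_card this).trans_eq (Fin.card_Iio i)) hi.not_ge
  · intro hpi
    have : Iic i ⊆ univ.filter p := fun j hj => by simpa using hp (mem_Iic.mp hj) hpi
    exact (Fin.card_Iic i ▸ card_le_card this : (i : ℕ) + 1 ≤ _)

lemma exists_equiv_monotone_two_levels {n : ℕ} (d : Fin n → ℕ) (S : Finset (Fin n)) {a b : ℕ}
    (hab : a < b) (hS : ∀ v ∈ S, d v = a) (hSc : ∀ v ∉ S, b ≤ d v) :
    ∃ e : Fin n ≃ Fin n, Monotone (d ∘ e) ∧
      ∀ i : Fin n, ((i : ℕ) < #S → d (e i) = a) ∧ (#S ≤ i → b ≤ d (e i)) := by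
  have hlow : ∀ v, d v < b ↔ v ∈ S := fun v =>
    ⟨fun hv => by_contra fun hvS => (hSc v hvS).not_gt hv, fun hv => hS v hv ▸ hab⟩
  let e := Tuple.sort d
  have hcard : #{i | d (e i) < b} = #S :=
    card_equiv e fun i => by simp [hlow]
  have hlt : ∀ i : Fin n, (i : ℕ) < #S ↔ d (e i) < b := fun i => by
    rw [← hcard]
    exact Fin.val_lt_card_filter_iff
      (fun i j hji hi => (Tuple.monotone_sort d hji).trans_lt hi) i
  refine ⟨e, Tuple.monotone_sort d, fun i => ⟨fun hi => hS _ ((hlow _).mp ((hlt i).mp hi)),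
    fun hi => not_lt.mp fun h => ((hlt i).mpr h).not_ge hi⟩⟩

lemma exists_part_sizes {r : ℕ} (hr : 2 ≤ r) (s m cap : ℕ) (hm : m ≤ (r - 1) * cap) :
    ∃ c : Fin r → ℕ, ∑ j, c j = s + m ∧ c ⟨0, by omega⟩ = s ∧
      (∀ j : Fin r, j.val ≠ 0 → c j ≤ cap) ∧ c ⟨r - 1, by omega⟩ = m - (r - 2) * cap := by
  let g (i : ℕ) : ℕ := min m (i * cap)
  have hg : Monotone g := fun i j hij => min_le_min_left _ (Nat.mul_le_mul_right _ hij)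
  refine ⟨fun j => if j.val = 0 then s else g j - g (j - 1), ?_, by simp, fun j hj => ?_, ?_⟩
  · obtain ⟨k, rfl⟩ : ∃ k, r = k + 1 := ⟨r - 1, by omega⟩
    rw [Fin.sum_univ_eq_sum_range (fun i => if i = 0 then s else g i - g (i - 1)),
      sum_range_succ']
    simp only [Nat.add_one_ne_zero, if_false, if_true, Nat.add_sub_cancel]
    rw [sum_range_tsub hg]
    rw [Nat.add_sub_cancel] at hm
    simp [g, min_eq_left hm, add_comm]
  · simp only [hj, if_false, g]
    obtain ⟨i, hi⟩ : ∃ i, (j : ℕ) = i + 1 := ⟨j - 1, by omega⟩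
    rw [hi, Nat.add_sub_cancel, Nat.add_mul, Nat.one_mul]
    omega
  · have hr1 : r - 1 ≠ 0 := by omega
    simp only [hr1, if_false, g, show r - 1 - 1 = r - 2 by omega, min_eq_left hm]
    omega

theorem exists_comap_top_degrees_not_hasTilingAllBut {α : Type*} [Fintype α]
    (H : SimpleGraph α) {r n s m cap E : ℕ} (hr : 2 ≤ r) (hn : s + m = n) (hcap : cap < s)
    (hm : m ≤ (r - 1) * cap)
    (hsmall : Fintype.card α * (m - (r - 2) * cap) < minClassSize H r * (n - E)) :
    ∃ G : SimpleGraph (Fin n),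
      (∃ e : Fin n ≃ Fin n, Monotone (degN G ∘ e) ∧
        ∀ i : Fin n, ((i : ℕ) < s → degN G (e i) = m) ∧ (s ≤ i → n ≤ degN G (e i) + cap)) ∧
      ¬ HasTilingAllBut H G E := by
  obtain ⟨c, hsum, hc0, hc, hlast⟩ := exists_part_sizes hr s m cap hm
  obtain ⟨P, hP⟩ := exists_card_fiber_eq c (hsum.trans hn)
  let G := (⊤ : SimpleGraph (Fin r)).comap P
  have hdeg : ∀ v, degN G v = n - c (P v) := by simp [G, degN_comap_top, hP]
  have hdeg_high : ∀ v, P v ≠ ⟨0, by omega⟩ → n ≤ degN G v + cap := fun v hv => by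
    rw [hdeg]
    have := hc (P v) fun h => hv (Fin.ext h)
    omega
  obtain ⟨e, hmono, he⟩ := exists_equiv_monotone_two_levels (degN G) {v | P v = ⟨0, by omega⟩}
    (a := m) (b := n - cap) (by omega)
    (fun v hv => by rw [hdeg, (mem_filter.mp hv).2, hc0]; omega)
    (fun v hv => by have := hdeg_high v (by simpa using hv); omega)
  rw [hP, hc0] at he
  refine ⟨G, ⟨e, hmono, fun i => ⟨(he i).1, fun hi => by have := (he i).2 hi; omega⟩⟩,
    not_hasTilingAllBut_comap_top P ⟨r - 1, by omega⟩ ?_⟩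
  rwa [hP, hlast, Fintype.card_fin]

lemma admissible_parameters {r n s m E σ h : ℕ} {w η : ℝ} (hr : 2 ≤ r) (hσ : 1 ≤ σ)
    (hrσ : r * σ ≤ h) (hw : ((r : ℝ) - 1) * w * h = h - σ) (hη : 0 < η) (hn : 0 < n)
    (hs : (s : ℝ) = (w + (r - 1) * η) * n) (hm : (m : ℝ) = (1 - w - (r - 1) * η) * n)
    (hE : (E : ℝ) = η * n) :
    s + m = n ∧ ((s - r * E : ℕ) : ℝ) = (w - η) * n ∧ s - r * E < s ∧
      m ≤ (r - 1) * (s - r * E) ∧ h * (m - (r - 2) * (s - r * E)) < σ * (n - E) := by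
  have hrR : (2 : ℝ) ≤ r := by exact_mod_cast hr
  have hσR : (1 : ℝ) ≤ σ := by exact_mod_cast hσ
  have hrσR : (r : ℝ) * σ ≤ h := by exact_mod_cast hrσ
  have hnR : (0 : ℝ) < n := by exact_mod_cast hn
  have hσw : (σ : ℝ) ≤ w * h := by nlinarith
  have hh : (0 : ℝ) < h := by nlinarith
  have hrw : 1 ≤ (r : ℝ) * w := le_of_mul_le_mul_right (by linarith) hh
  have ha : 0 ≤ 1 - w - (r - 1) * η := nonneg_of_mul_nonneg_left (hm ▸ m.cast_nonneg) hnR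
  have hηw : η ≤ w := by nlinarith
  have hη1 : η < 1 := by nlinarith
  have hsum : s + m = n := by exact_mod_cast (by rw [hs, hm]; ring : (s : ℝ) + m = n)
  have hrE : r * E ≤ s := by
    exact_mod_cast (by rw [hs, hE]; nlinarith : (r : ℝ) * E ≤ s)
  have hE0 : 0 < E := by exact_mod_cast (by rw [hE]; positivity : (0 : ℝ) < E)
  have hEn : E < n := by exact_mod_cast (by rw [hE]; nlinarith : (E : ℝ) < n)
  have hcap : ((s - r * E : ℕ) : ℝ) = (w - η) * n := by
    rw [Nat.cast_sub hrE, hs, Nat.cast_mul, hE]; ring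
  have hrE0 : 0 < r * E := Nat.mul_pos (by omega) hE0
  refine ⟨hsum, hcap, Nat.sub_lt (hrE0.trans_le hrE) hrE0, ?_, ?_⟩
  · have : (m : ℝ) ≤ ((r - 1 : ℕ) : ℝ) * ((s - r * E : ℕ) : ℝ) := by
      rw [hcap, Nat.cast_sub (by omega), hm]; push_cast; nlinarith
    exact_mod_cast this
  · rcases le_or_gt m ((r - 2) * (s - r * E)) with hle | hlt
    · rw [Nat.sub_eq_zero_of_le hle, mul_zero]
      exact Nat.mul_pos (by omega) (by omega)
    · have hσh : (σ : ℝ) < h := by nlinarith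
      have key : (h : ℝ) * ((1 - w - (r - 1) * η) * n - (r - 2) * ((w - η) * n)) =
          (σ - h * η) * n := by linear_combination (-(n : ℝ)) * hw
      have : (h : ℝ) * ((m - (r - 2) * (s - r * E) : ℕ) : ℝ) < σ * ((n - E : ℕ) : ℝ) := by
        rw [Nat.cast_sub hlt.le, Nat.cast_sub hEn.le, Nat.cast_mul, hcap, Nat.cast_sub hr, hm, hE]
        push_cast
        nlinarith [mul_pos (mul_pos hη hnR) (sub_pos.mpr hσh)]
      exact_mod_cast this

/-- Proposition 2.4: one cannot have significantly more than `ωn/h`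
vertices of degree below `(1 - 1/χ_cr(H))n`.  Here `s = (ω/h + (r-1)η)n`,
`dlow = (1 - ω/h - (r-1)η)n` and `E = ηn` (all integers by assumption). -/
theorem extremal_example_small_degrees
    {α : Type*} [Fintype α] (H : SimpleGraph α) (r : ℕ)
    (hr : 2 ≤ r) (hchi : H.chromaticNumber = (r : ℕ∞))
    (σ ω h : ℝ) (hσ : σ = (minClassSize H r : ℝ)) (hh : h = (Fintype.card α : ℝ))
    (hω : ω = (h - σ) / ((r : ℝ) - 1))
    (η : ℝ) (hη : 0 < η) :
    ∃ n₀ : ℕ, ∀ n : ℕ, n₀ ≤ n →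
      ∀ s dlow E : ℕ,
        (s : ℝ) = (ω / h + ((r : ℝ) - 1) * η) * n →
        (dlow : ℝ) = (1 - ω / h - ((r : ℝ) - 1) * η) * n →
        (E : ℝ) = η * n →
        ∃ G : SimpleGraph (Fin n),
          (∃ e : Fin n ≃ Fin n,
            (∀ i j : Fin n, i ≤ j → degN G (e i) ≤ degN G (e j)) ∧
            (∀ i : Fin n, (i : ℕ) + 1 ≤ s → degN G (e i) = dlow) ∧
            (∀ i : Fin n, s < (i : ℕ) + 1 →
              (1 - ω / h + η) * n ≤ (degN G (e i) : ℝ))) ∧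
          ¬ HasTilingAllBut H G E := by
  obtain ⟨c⟩ := chromaticNumber_le_iff_colorable.mp hchi.le
  have hσ1 := one_le_minClassSize H (by omega) hchi
  have hrσ := mul_minClassSize_le_card H c
  have hw : ((r : ℝ) - 1) * (ω / h) * Fintype.card α = Fintype.card α - minClassSize H r := by
    have : h ≠ 0 := by rw [hh]; exact_mod_cast ((Nat.mul_pos (by omega) hσ1).trans_le hrσ).ne'
    have : (r : ℝ) - 1 ≠ 0 := by rw [sub_ne_zero]; exact_mod_cast (by omega : r ≠ 1)
    rw [hω, ← hh, ← hσ]; field_simp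
  refine ⟨1, fun n hn s dlow E hs hdlow hE => ?_⟩
  obtain ⟨hsum, hcap, hcap_lt, hfit, hsmall⟩ :=
    admissible_parameters hr hσ1 hrσ hw hη hn hs hdlow hE
  obtain ⟨G, ⟨e, hmono, he⟩, hG⟩ :=
    exists_comap_top_degrees_not_hasTilingAllBut H hr hsum hcap_lt hfit hsmall
  refine ⟨G, ⟨e, fun i j hij => hmono hij, fun i hi => (he i).1 (by omega), fun i hi => ?_⟩, hG⟩
  have : (n : ℝ) ≤ degN G (e i) + ((s - r * E : ℕ) : ℝ) := by exact_mod_cast (he i).2 (by omega)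
  rw [hcap] at this
  linarith
end

section
/- Let H be a graph with χ(H) =: r ≥ 3 and hcf_χ(H) = 1, and let h := |H|. Fix an integer p with 1 ≤ p ≤ r − 1. For each optimal colouring c of H let x_{c,1} ≤ … ≤ x_{c,r} denote the sizes of its colour classes, let D_c be the multiset [x_{c,1}, …, x_{c,r}], let z_p := C(r,p) be the number of p-element sub-multisets (p-subsets) A_{p,c,1}, …, A_{p,c,z_p} contained in D_c (indexed by the p-element subsets of the r positions), and set S_{p,c,J} := Σ_{x ∈ A_{p,c,J}} x for each 1 ≤ J ≤ z_p. Then there exist a collection of non-negative integers {a_{p,c,i} : c an optimal colouring of H, 1 ≤ i ≤ z_p} and ā ∈ ℕ such that a_{p,c,i} ≤ ā for all c and all 1 ≤ i ≤ z_p, and Σ_c Σ_{i=1}^{z_p} a_{p,c,i}·S_{p,c,i} ≡ 1 (mod h). -/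
open SimpleGraph

/-!
Exchanging one element of a `p`-set of colour classes for another changes its sum by a difference
of two class sizes, so every common divisor of the `p`-sums divides all such differences and is
therefore `1` by `hcf_χ(H) = 1`. Bézout then writes `1` as an integer combination of the
`p`-sums, and reducing its coefficients modulo `h` makes them natural numbers below `h`.
-/

open Finset

theorem exists_sum_mul_eq_one_of_forall_dvd {ι : Type*} {s : Finset ι} {f : ι → ℕ}
    (hf : ∀ d : ℕ, (∀ i ∈ s, d ∣ f i) → d = 1) :
    ∃ w : ι → ℤ, ∑ i ∈ s, w i * f i = 1 := by
  obtain ⟨w, hw⟩ := s.gcd_eq_sum_mul fun i ↦ (f i : ℤ)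
  set g := s.gcd fun i ↦ (f i : ℤ)
  have hg : IsUnit g := Int.isUnit_iff_natAbs_eq.2 <| hf _ fun i hi ↦
    Int.natAbs_dvd_natAbs.2 (gcd_dvd (f := fun i ↦ (f i : ℤ)) hi)
  refine ⟨fun i ↦ w i * g, ?_⟩
  simp only [← Int.isUnit_mul_self hg, hw, sum_mul]
  exact sum_congr rfl fun i _ ↦ by ring

theorem Nat.exists_lt_sum_mul_modEq_one {ι : Type*} {s : Finset ι} {f : ι → ℕ} {w : ι → ℤ}
    (hw : ∑ i ∈ s, w i * f i = 1) (n : ℕ) [NeZero n] :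
    ∃ a : ι → ℕ, (∀ i, a i < n) ∧ ∑ i ∈ s, a i * f i ≡ 1 [MOD n] := by
  refine ⟨fun i ↦ (w i : ZMod n).val, fun i ↦ ZMod.val_lt _, ?_⟩
  rw [← ZMod.natCast_eq_natCast_iff]
  push_cast
  simp only [ZMod.natCast_zmod_val]
  exact_mod_cast congrArg (Int.cast : ℤ → ZMod n) hw

theorem dvd_sub_of_forall_dvd_sum_powersetCard {β R : Type*} [Fintype β] [DecidableEq β]
    [CommRing R] (x : β → R) {p : ℕ} (hp1 : 1 ≤ p) (hp : p < Fintype.card β) {d : R}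
    (hd : ∀ I ∈ powersetCard p univ, d ∣ ∑ k ∈ I, x k) (i j : β) : d ∣ x i - x j := by
  obtain rfl | hij := eq_or_ne i j
  · simp
  have hcard : p - 1 ≤ (univ \ {i, j}).card := by
    rw [card_sdiff_of_subset (subset_univ _), card_univ, card_pair hij]
    omega
  obtain ⟨K, hK, hKcard⟩ := exists_subset_card_eq hcard
  have hiK : i ∉ K := fun h ↦ by simpa using hK h
  have hjK : j ∉ K := fun h ↦ by simpa using hK h
  have hmem : ∀ k ∉ K, insert k K ∈ powersetCard p univ := fun k hk ↦
    mem_powersetCard.2 ⟨subset_univ _, by rw [card_insert_of_notMem hk, hKcard]; omega⟩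
  have hsub : ∑ k ∈ insert i K, x k - ∑ k ∈ insert j K, x k = x i - x j := by
    rw [sum_insert hiK, sum_insert hjK]
    ring
  exact hsub ▸ dvd_sub (hd _ (hmem i hiK)) (hd _ (hmem j hjK))

namespace HcfChiOne

variable {α : Type*} {H : SimpleGraph α} {r : ℕ}

theorem eq_one_of_forall_dvd (hH : HcfChiOne H r) {d : ℕ}
    (hd : ∀ (c : H.Coloring (Fin r)) (i j : Fin r),
      (d : ℤ) ∣ (({v | c v = i}.ncard : ℤ) - ({v | c v = j}.ncard : ℤ))) : d = 1 := by
  obtain rfl | rfl | hd2 : d = 0 ∨ d = 1 ∨ 2 ≤ d := by omega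
  · exact absurd (fun c i j ↦ (zero_dvd_iff.1 (hd c i j)).symm ▸ dvd_zero _) (hH 2 le_rfl)
  · rfl
  · exact absurd hd (hH d hd2)

theorem neZero_card [Fintype α] (hH : HcfChiOne H r) : NeZero (Fintype.card α) := by
  refine ⟨fun h ↦ absurd (hH.eq_one_of_forall_dvd fun c i j ↦ ?_) zero_ne_one⟩
  have : IsEmpty α := Fintype.card_eq_zero_iff.1 h
  simp [Set.eq_empty_of_isEmpty]

end HcfChiOne

theorem bezout_colour_classes_general
    {α : Type*} [Fintype α] (H : SimpleGraph α) (r : ℕ)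
    (hhcf : HcfChiOne H r)
    (p : ℕ) (hp1 : 1 ≤ p) (hpr : p ≤ r - 1) :
    ∃ (a : H.Coloring (Fin r) → Finset (Fin r) → ℕ) (abar : ℕ),
      (∀ (c : H.Coloring (Fin r)) (J : Finset (Fin r)), a c J ≤ abar) ∧
      (∑ᶠ c : H.Coloring (Fin r),
          ∑ J ∈ Finset.powersetCard p (Finset.univ : Finset (Fin r)),
            a c J * ∑ j ∈ J, {v | c v = j}.ncard) ≡ 1 [MOD Fintype.card α] := by
  classical
  have := hhcf.neZero_card
  let S (cJ : H.Coloring (Fin r) × Finset (Fin r)) : ℕ := ∑ j ∈ cJ.2, {v | cJ.1 v = j}.ncard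
  have hS : ∀ d : ℕ, (∀ cJ ∈ univ ×ˢ powersetCard p univ, d ∣ S cJ) → d = 1 := fun d hd ↦
    hhcf.eq_one_of_forall_dvd fun c ↦ dvd_sub_of_forall_dvd_sum_powersetCard _ hp1
      (by rw [Fintype.card_fin]; omega) fun J hJ ↦ by
        exact_mod_cast hd (c, J) (mem_product.2 ⟨mem_univ _, hJ⟩)
  obtain ⟨w, hw⟩ := exists_sum_mul_eq_one_of_forall_dvd hS
  obtain ⟨a, ha, hsum⟩ := Nat.exists_lt_sum_mul_modEq_one hw (Fintype.card α)
  refine ⟨fun c J ↦ a (c, J), Fintype.card α, fun c J ↦ (ha _).le, ?_⟩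
  rwa [finsum_eq_sum_of_fintype, ← sum_product' univ _ fun c J ↦ a (c, J) * S (c, J)]

/-- Theorem 5.2, case `r ≥ 3`: if `χ(H) = r ≥ 3` and `hcf_χ(H) = 1`,
there are bounded non-negative coefficients, indexed by optimal colourings `c` of `H`
together with `p`-element subsets `J` of the `r` colour-class positions, such that the
corresponding combination of the sums `S = Σ_{j ∈ J} |c⁻¹(j)|` is `≡ 1 (mod h)`. -/
theorem bezout_colour_classes
    {α : Type*} [Fintype α] (H : SimpleGraph α) (r : ℕ)
    (hr : 3 ≤ r) (hchi : H.chromaticNumber = (r : ℕ∞)) (hhcf : HcfChiOne H r)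
    (p : ℕ) (hp1 : 1 ≤ p) (hpr : p ≤ r - 1) :
    ∃ (a : H.Coloring (Fin r) → Finset (Fin r) → ℕ) (abar : ℕ),
      (∀ (c : H.Coloring (Fin r)) (J : Finset (Fin r)), a c J ≤ abar) ∧
      (∑ᶠ c : H.Coloring (Fin r),
          ∑ J ∈ Finset.powersetCard p (Finset.univ : Finset (Fin r)),
            a c J * ∑ j ∈ J, {v | c v = j}.ncard) ≡ 1 [MOD Fintype.card α] :=
  bezout_colour_classes_general H r hhcf p hp1 hpr
end
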